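/- Let λ > 0 and let f(t) solve the ODE df/dt = λ A f on ℝ² with A = [[−1, 1], [1, −1]] and initial datum f^I having strictly positive entries with f_1^I + f_2^I = 1, so the steady state is f^∞ = (1/2, 1/2). Let ψ be an entropy generator such that either (i) ψ'' is convex on (0,∞), or (ii) ψ' is concave on (0,1) and ψ' is convex on (1,∞). Then the Fisher information I_ψ(f|f^∞) := λ (f_1 − f_2)(ψ'(2 f_1) − ψ'(2 f_2)) decays with rate 4λ: I_ψ(f(t)|f^∞) ≤ e^{−4λ t} · I_ψ(f^I|f^∞) for all t ≥ 0. -/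

import Mathlib

open Real Set

/-!
Along the flow `f₁ + f₂ = 1` and `f₁ - f₂ = d e^{-2λt}`, so with `φ(u) = ψ'(1 + u) - ψ'(1 - u)`
the Fisher information is `λ u φ(u)` at `u = d e^{-2λt}`. Either hypothesis on `ψ` makes
`φ'(u) = ψ''(1 + u) + ψ''(1 - u)` nondecreasing on `(0, 1)`, so the odd function `φ` is convex on
`[0, 1)` and vanishes at `0`. Hence `φ(r u) ≤ r φ(u)` for `r ∈ [0, 1]`, i.e.
`r u φ(r u) ≤ r² u φ(u)`, which for `r = e^{-2λt}` is the claim.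
-/

theorem ConvexOn.add_reflect_le_add_reflect {s : Set ℝ} {g : ℝ → ℝ} (hg : ConvexOn ℝ s g)
    {c a b : ℝ} (hab : |a| ≤ b) (hcb : c - b ∈ s) (hbc : c + b ∈ s) :
    g (c + a) + g (c - a) ≤ g (c + b) + g (c - b) := by
  obtain rfl | hb := (abs_nonneg a |>.trans hab).eq_or_lt
  · rw [abs_nonpos_iff.1 hab]
  obtain ⟨hba, hab⟩ := abs_le.1 hab
  have hp : 0 ≤ (b + a) / (2 * b) := by apply div_nonneg <;> linarith
  have hq : 0 ≤ (b - a) / (2 * b) := by apply div_nonneg <;> linarith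
  have hpq : (b + a) / (2 * b) + (b - a) / (2 * b) = 1 := by field_simp; ring
  have hplus := hg.2 hbc hcb hp hq hpq
  have hminus := hg.2 hbc hcb hq hp (by linarith)
  simp only [smul_eq_mul] at hplus hminus
  rw [show (b + a) / (2 * b) * (c + b) + (b - a) / (2 * b) * (c - b) = c + a by
    field_simp; ring] at hplus
  rw [show (b - a) / (2 * b) * (c + b) + (b + a) / (2 * b) * (c - b) = c - a by
    field_simp; ring] at hminus
  linear_combination hplus + hminus + (g (c + b) + g (c - b)) * hpq

theorem eq_mul_exp_of_hasDerivAt_const_mul {g : ℝ → ℝ} {k : ℝ}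
    (hg : ∀ t, HasDerivAt g (k * g t) t) (t : ℝ) : g t = g 0 * exp (k * t) := by
  have hconst : ∀ t, HasDerivAt (fun t => g t * exp (-(k * t))) 0 t := fun t => by
    have hexp : HasDerivAt (fun t => exp (-(k * t))) (exp (-(k * t)) * -k) t := by
      simpa using ((hasDerivAt_id t).const_mul k).neg.exp
    exact ((hg t).mul hexp).congr_deriv (by ring)
  have := is_const_of_deriv_eq_zero (fun t => (hconst t).differentiableAt)
    (fun t => (hconst t).deriv) t 0
  simp only [mul_zero, neg_zero, exp_zero, mul_one] at this
  rw [← this, mul_assoc, ← exp_add, neg_add_cancel, exp_zero, mul_one]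

section Reflection

variable {F : ℝ → ℝ}

theorem monotoneOn_deriv_add_deriv_reflect (hF : DifferentiableOn ℝ F (Ioi 0))
    (hcase : ConvexOn ℝ (Ioi 0) (deriv F) ∨ (ConcaveOn ℝ (Ioo 0 1) F ∧ ConvexOn ℝ (Ioi 1) F)) :
    MonotoneOn (fun u => deriv F (1 + u) + deriv F (1 - u)) (Ioo 0 1) := by
  intro a ha b hb hab
  rcases hcase with hconv | ⟨hconc, hconv⟩
  · exact hconv.add_reflect_le_add_reflect (abs_le.2 ⟨by linarith [ha.1], hab⟩)
      (by simp only [mem_Ioi]; linarith [hb.2]) (by simp only [mem_Ioi]; linarith [hb.1])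
  · have hdiff : ∀ x ∈ Ioi (0 : ℝ), DifferentiableAt ℝ F x := fun x hx =>
      hF.differentiableAt (isOpen_Ioi.mem_nhds hx)
    have hleft := hconc.antitoneOn_deriv fun x hx => hdiff x hx.1
    have hright := hconv.monotoneOn_deriv fun x (hx : 1 < x) =>
      hdiff x (by simp only [mem_Ioi]; linarith)
    have hplus : deriv F (1 + a) ≤ deriv F (1 + b) :=
      hright (show 1 < 1 + a by linarith [ha.1]) (show 1 < 1 + b by linarith [hb.1]) (by linarith)
    have hminus : deriv F (1 - a) ≤ deriv F (1 - b) :=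
      hleft (⟨by linarith [hb.2], by linarith [hb.1]⟩ : 1 - b ∈ Ioo (0 : ℝ) 1)
        (⟨by linarith [ha.2], by linarith [ha.1]⟩ : 1 - a ∈ Ioo (0 : ℝ) 1) (by linarith)
    exact add_le_add hplus hminus

theorem hasDerivAt_sub_reflect (hF : DifferentiableOn ℝ F (Ioi 0)) {u : ℝ}
    (hu : u ∈ Ioo (-1) 1) :
    HasDerivAt (fun v => F (1 + v) - F (1 - v)) (deriv F (1 + u) + deriv F (1 - u)) u := by
  have hdiff : ∀ x ∈ Ioi (0 : ℝ), HasDerivAt F (deriv F x) x := fun x hx =>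
    (hF.differentiableAt (isOpen_Ioi.mem_nhds hx)).hasDerivAt
  have hplus := (hdiff (1 + u) (by simp only [mem_Ioi]; linarith [hu.1])).comp u
    ((hasDerivAt_id u).const_add 1)
  have hminus := (hdiff (1 - u) (by simp only [mem_Ioi]; linarith [hu.2])).comp u
    ((hasDerivAt_id u).const_sub 1)
  exact (hplus.sub hminus).congr_deriv (by ring)

theorem convexOn_sub_reflect (hF : DifferentiableOn ℝ F (Ioi 0))
    (hcase : ConvexOn ℝ (Ioi 0) (deriv F) ∨ (ConcaveOn ℝ (Ioo 0 1) F ∧ ConvexOn ℝ (Ioi 1) F)) :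
    ConvexOn ℝ (Ico 0 1) (fun v => F (1 + v) - F (1 - v)) := by
  have hderiv : ∀ u ∈ Ico (0 : ℝ) 1, HasDerivAt (fun v => F (1 + v) - F (1 - v))
      (deriv F (1 + u) + deriv F (1 - u)) u := fun u hu =>
    hasDerivAt_sub_reflect hF ⟨by linarith [hu.1], hu.2⟩
  refine MonotoneOn.convexOn_of_deriv (convex_Ico 0 1)
    (fun u hu => (hderiv u hu).continuousAt.continuousWithinAt) ?_ ?_
  · rw [interior_Ico]
    exact fun u hu => (hderiv u (Ioo_subset_Ico_self hu)).differentiableAt.differentiableWithinAt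
  · rw [interior_Ico]
    refine (monotoneOn_deriv_add_deriv_reflect hF hcase).congr fun u hu => ?_
    exact ((hderiv u (Ioo_subset_Ico_self hu)).deriv).symm

theorem mul_sub_reflect_le_sq_mul (hF : DifferentiableOn ℝ F (Ioi 0))
    (hcase : ConvexOn ℝ (Ioi 0) (deriv F) ∨ (ConcaveOn ℝ (Ioo 0 1) F ∧ ConvexOn ℝ (Ioi 1) F))
    {y r : ℝ} (hy : y ∈ Ioo (-1) 1) (hr : r ∈ Icc 0 1) :
    r * y * (F (1 + r * y) - F (1 - r * y)) ≤ r ^ 2 * (y * (F (1 + y) - F (1 - y))) := by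
  have hscale : ∀ x ∈ Ico (0 : ℝ) 1,
      F (1 + r * x) - F (1 - r * x) ≤ r * (F (1 + x) - F (1 - x)) := by
    intro x hx
    have hconv := (convexOn_sub_reflect hF hcase).2 hx (left_mem_Ico.2 one_pos) hr.1
      (sub_nonneg.2 hr.2) (add_sub_cancel r 1)
    simpa using hconv
  obtain hy0 | hy0 := le_total 0 y
  · have := hscale y ⟨hy0, hy.2⟩
    nlinarith [mul_nonneg hr.1 hy0]
  · have := hscale (-y) ⟨by linarith, by linarith [hy.1]⟩
    simp only [mul_neg, sub_neg_eq_add, ← sub_eq_add_neg] at this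
    nlinarith [mul_nonneg hr.1 (neg_nonneg.2 hy0)]

end Reflection

theorem bgk_two_velocity_solution {lam : ℝ} {f : ℝ → ℝ × ℝ}
    (hode : ∀ t : ℝ, HasDerivAt f (lam • (-(f t).1 + (f t).2, (f t).1 - (f t).2)) t) (t : ℝ) :
    (f t).1 + (f t).2 = (f 0).1 + (f 0).2 ∧
      (f t).1 - (f t).2 = ((f 0).1 - (f 0).2) * exp (-(2 * lam) * t) := by
  have hfst : ∀ s, HasDerivAt (fun r => (f r).1) (lam * (-(f s).1 + (f s).2)) s := fun s => by
    simpa using (hode s).hasFDerivAt.fst.hasDerivAt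
  have hsnd : ∀ s, HasDerivAt (fun r => (f r).2) (lam * ((f s).1 - (f s).2)) s := fun s => by
    simpa using (hode s).hasFDerivAt.snd.hasDerivAt
  constructor
  · simpa using eq_mul_exp_of_hasDerivAt_const_mul (k := 0)
      (fun s => ((hfst s).add (hsnd s)).congr_deriv (by ring)) t
  · exact eq_mul_exp_of_hasDerivAt_const_mul (g := fun r => (f r).1 - (f r).2)
      (fun s => ((hfst s).sub (hsnd s)).congr_deriv (by ring)) t

theorem stmt_1
    (lam : ℝ) (hlam : 0 < lam)
    (ψ : ℝ → ℝ)
    (hψsmooth : ContDiffOn ℝ 2 ψ (Ioi 0))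
    (hcase : ConvexOn ℝ (Ioi 0) (deriv (deriv ψ)) ∨
      (ConcaveOn ℝ (Ioo 0 1) (deriv ψ) ∧ ConvexOn ℝ (Ioi 1) (deriv ψ)))
    (fI : ℝ × ℝ) (hI1 : 0 < fI.1) (hI2 : 0 < fI.2) (hIsum : fI.1 + fI.2 = 1)
    (f : ℝ → ℝ × ℝ)
    (hf0 : f 0 = fI)
    (hode : ∀ t : ℝ, HasDerivAt f (lam • (-(f t).1 + (f t).2, (f t).1 - (f t).2)) t) :
    ∀ t : ℝ, 0 ≤ t →
      lam * ((f t).1 - (f t).2) * (deriv ψ (2 * (f t).1) - deriv ψ (2 * (f t).2)) ≤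
        Real.exp (-(4 * lam) * t) *
          (lam * (fI.1 - fI.2) * (deriv ψ (2 * fI.1) - deriv ψ (2 * fI.2))) := by
  intro t ht
  have hψ' : DifferentiableOn ℝ (deriv ψ) (Ioi 0) :=
    (hψsmooth.deriv_of_isOpen isOpen_Ioi (by norm_num)).differentiableOn one_ne_zero
  obtain ⟨hsum, hdiff⟩ := bgk_two_velocity_solution hode t
  rw [hf0, hIsum] at hsum
  rw [hf0] at hdiff
  set d := fI.1 - fI.2
  set e := exp (-(2 * lam) * t)
  have hdecay := mul_sub_reflect_le_sq_mul hψ' hcase (y := d) (r := e)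
    ⟨by linarith, by linarith⟩ ⟨(exp_pos _).le, exp_le_one_iff.2 (by nlinarith)⟩
  have hexp : exp (-(4 * lam) * t) = e ^ 2 := by rw [← exp_nat_mul]; ring_nf
  rw [show 2 * (f t).1 = 1 + e * d by linarith, show 2 * (f t).2 = 1 - e * d by linarith,
    show 2 * fI.1 = 1 + d by linarith, show 2 * fI.2 = 1 - d by linarith, hdiff, hexp]
  linarith [mul_le_mul_of_nonneg_left hdecay hlam.le]
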